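/- arXiv:2008.00390 — 5 statements merged into one kernel-verified Lean document; each statement's English description precedes it below -/
import Mathlib

section
/- Let G be a countable group and σ, τ : G → G group endomorphisms. The map Ψ which sends a (σ,τ)-derivation D of ℂ[G] to the function χ_D : G × G → ℂ, χ_D(h, g) = D(g)(h), is a ℂ-linear bijection from the space of (σ,τ)-derivations of ℂ[G] onto the space of locally finite characters, i.e.: (i) for every (σ,τ)-derivation D, the function χ_D is a locally finite character; (ii) every locally finite character arises as χ_D for exactly one (σ,τ)-derivation D. -/
/-- Extension of a group endomorphism to a ℂ-algebra endomorphism of `ℂ[G]`. -/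
noncomputable def algExt {G : Type*} [Group G] (σ : G →* G) :
    MonoidAlgebra ℂ G →ₐ[ℂ] MonoidAlgebra ℂ G :=
  MonoidAlgebra.mapDomainAlgHom ℂ ℂ σ

/-- A ℂ-linear map `D : ℂ[G] → ℂ[G]` is a `(σ,τ)`-derivation. -/
def IsSigmaTauDerivation {G : Type*} [Group G] (σ τ : G →* G)
    (D : MonoidAlgebra ℂ G →ₗ[ℂ] MonoidAlgebra ℂ G) : Prop :=
  ∀ a b : MonoidAlgebra ℂ G, D (a * b) = D a * algExt τ b + algExt σ a * D b

/-- `χ : G × G → ℂ` is a character (for the groupoid associated with `(σ,τ)`). -/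
def IsCharacter {G : Type*} [Group G] (σ τ : G →* G) (χ : G × G → ℂ) : Prop :=
  ∀ h g₁ g₂ : G, χ (h, g₂ * g₁) = χ (h * (τ g₁)⁻¹, g₂) + χ ((σ g₂)⁻¹ * h, g₁)

/-- A character is locally finite if for every `g` the set `{h | χ(h,g) ≠ 0}` is finite. -/
def IsLocallyFinite {G : Type*} [Group G] (χ : G × G → ℂ) : Prop :=
  ∀ g : G, {h : G | χ (h, g) ≠ 0}.Finite

/-- The map `Ψ` sending a derivation `D` to the function `χ_D(h,g) = D(g)(h)`. -/
noncomputable def chiOf {G : Type*} [Group G]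
    (D : MonoidAlgebra ℂ G →ₗ[ℂ] MonoidAlgebra ℂ G) : G × G → ℂ :=
  fun p => (D (MonoidAlgebra.of ℂ G p.2)).coeff p.1

/-! Since `G` is a basis of `ℂ[G]`, a linear map `D` is the same thing as its locally finite matrix
`(h, g) ↦ D(g)(h)`. Both sides of the twisted Leibniz rule are bilinear in `(a, b)`, so it suffices
to check it on basis elements `g₂, g₁`, and there its coefficient at `h` is precisely the character
identity for `(h, g₁, g₂)`. -/

open MonoidAlgebra

section
variable {G : Type*} [Group G]

lemma algExt_single (σ : G →* G) (g : G) (c : ℂ) : algExt σ (single g c) = single (σ g) c := by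
  simp [algExt]

lemma chiOf_smul_add (D D' : MonoidAlgebra ℂ G →ₗ[ℂ] MonoidAlgebra ℂ G) (c : ℂ) :
    chiOf (c • D + D') = c • chiOf D + chiOf D' :=
  rfl

lemma isLocallyFinite_chiOf (D : MonoidAlgebra ℂ G →ₗ[ℂ] MonoidAlgebra ℂ G) :
    IsLocallyFinite (chiOf D) :=
  fun g => (D (of ℂ G g)).coeff.hasFiniteSupport

lemma chiOf_injective :
    Function.Injective (chiOf : (MonoidAlgebra ℂ G →ₗ[ℂ] MonoidAlgebra ℂ G) → G × G → ℂ) :=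
  fun _ _ h => (basis G ℂ).ext fun g => coeff_injective <| Finsupp.ext fun x => congrFun h (x, g)

lemma coeff_twisted_leibniz (σ τ : G →* G) (D : MonoidAlgebra ℂ G →ₗ[ℂ] MonoidAlgebra ℂ G)
    (g₂ g₁ h : G) :
    (D (of ℂ G g₂) * algExt τ (of ℂ G g₁) + algExt σ (of ℂ G g₂) * D (of ℂ G g₁)).coeff h =
      chiOf D (h * (τ g₁)⁻¹, g₂) + chiOf D ((σ g₂)⁻¹ * h, g₁) := by
  simp only [of_apply, algExt_single, coeff_add, Finsupp.add_apply, coeff_mul_single_apply,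
    coeff_single_mul_apply, mul_one, one_mul]
  rfl

lemma isSigmaTauDerivation_iff_of (σ τ : G →* G) (D : MonoidAlgebra ℂ G →ₗ[ℂ] MonoidAlgebra ℂ G) :
    IsSigmaTauDerivation σ τ D ↔ ∀ g₂ g₁ : G, D (of ℂ G g₂ * of ℂ G g₁) =
      D (of ℂ G g₂) * algExt τ (of ℂ G g₁) + algExt σ (of ℂ G g₂) * D (of ℂ G g₁) := by
  refine ⟨fun hD g₂ g₁ => hD _ _, fun h a b => ?_⟩
  have hbilin : (LinearMap.mul ℂ (MonoidAlgebra ℂ G)).compr₂ D =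
      (LinearMap.mul ℂ _).compl₁₂ D (algExt τ).toLinearMap +
        (LinearMap.mul ℂ _).compl₁₂ (algExt σ).toLinearMap D :=
    LinearMap.ext_basis (basis G ℂ) (basis G ℂ) fun g₂ g₁ => by simpa using h g₂ g₁
  simpa using LinearMap.congr_fun₂ hbilin a b

theorem isSigmaTauDerivation_iff_isCharacter_chiOf (σ τ : G →* G)
    (D : MonoidAlgebra ℂ G →ₗ[ℂ] MonoidAlgebra ℂ G) :
    IsSigmaTauDerivation σ τ D ↔ IsCharacter σ τ (chiOf D) := by
  simp only [isSigmaTauDerivation_iff_of, ← coeff_inj, Finsupp.ext_iff, coeff_twisted_leibniz,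
    ← map_mul]
  exact ⟨fun h x g₁ g₂ => h g₂ g₁ x, fun h g₂ g₁ x => h x g₁ g₂⟩

noncomputable def linearMapOfChi (χ : G × G → ℂ) (hχ : IsLocallyFinite χ) :
    MonoidAlgebra ℂ G →ₗ[ℂ] MonoidAlgebra ℂ G :=
  (basis G ℂ).constr ℂ fun g => ofCoeff (Finsupp.ofSupportFinite (fun h => χ (h, g)) (hχ g))

lemma chiOf_linearMapOfChi (χ : G × G → ℂ) (hχ : IsLocallyFinite χ) :
    chiOf (linearMapOfChi χ hχ) = χ := by
  funext ⟨h, g⟩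
  simp only [chiOf, linearMapOfChi, of_apply, ← basis_apply, Module.Basis.constr_basis,
    coeff_ofCoeff]
  rfl

end

theorem derivations_equiv_locally_finite_characters_general
    {G : Type*} [Group G] (σ τ : G →* G) :
    (∀ D D' : MonoidAlgebra ℂ G →ₗ[ℂ] MonoidAlgebra ℂ G, ∀ c : ℂ,
        chiOf (c • D + D') = c • chiOf D + chiOf D') ∧
    (∀ D : MonoidAlgebra ℂ G →ₗ[ℂ] MonoidAlgebra ℂ G, IsSigmaTauDerivation σ τ D →
        IsCharacter σ τ (chiOf D) ∧ IsLocallyFinite (chiOf D)) ∧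
    (∀ χ : G × G → ℂ, IsCharacter σ τ χ → IsLocallyFinite χ →
        ∃! D : MonoidAlgebra ℂ G →ₗ[ℂ] MonoidAlgebra ℂ G,
          IsSigmaTauDerivation σ τ D ∧ chiOf D = χ) := by
  refine ⟨chiOf_smul_add, fun D hD => ?_, fun χ hχ hfin => ?_⟩
  · exact ⟨(isSigmaTauDerivation_iff_isCharacter_chiOf σ τ D).1 hD, isLocallyFinite_chiOf D⟩
  · refine ⟨linearMapOfChi χ hfin, ⟨?_, chiOf_linearMapOfChi χ hfin⟩, fun D hD => ?_⟩
    · rwa [isSigmaTauDerivation_iff_isCharacter_chiOf, chiOf_linearMapOfChi]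
    · exact chiOf_injective (hD.2.trans (chiOf_linearMapOfChi χ hfin).symm)

/-- `Ψ : D ↦ χ_D` is a ℂ-linear bijection from the space of
`(σ,τ)`-derivations of `ℂ[G]` onto the space of locally finite characters:
`Ψ` is additive and homogeneous, (i) every `χ_D` is a locally finite character, and
(ii) every locally finite character is `χ_D` for exactly one `(σ,τ)`-derivation `D`. -/
theorem derivations_equiv_locally_finite_characters
    {G : Type*} [Group G] [Countable G] (σ τ : G →* G) :
    (∀ D D' : MonoidAlgebra ℂ G →ₗ[ℂ] MonoidAlgebra ℂ G, ∀ c : ℂ,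
        chiOf (c • D + D') = c • chiOf D + chiOf D') ∧
    (∀ D : MonoidAlgebra ℂ G →ₗ[ℂ] MonoidAlgebra ℂ G, IsSigmaTauDerivation σ τ D →
        IsCharacter σ τ (chiOf D) ∧ IsLocallyFinite (chiOf D)) ∧
    (∀ χ : G × G → ℂ, IsCharacter σ τ χ → IsLocallyFinite χ →
        ∃! D : MonoidAlgebra ℂ G →ₗ[ℂ] MonoidAlgebra ℂ G,
          IsSigmaTauDerivation σ τ D ∧ chiOf D = χ) :=
  derivations_equiv_locally_finite_characters_general σ τ
end

section
/- Let G be a group, σ, τ : G → G group endomorphisms, a ∈ G a (σ,τ)-central element, and φ : G → (ℂ, +) a group homomorphism. Then the ℂ-linear map D : ℂ[G] → ℂ[G] determined on basis elements by D(g) = φ(g)·(σ(g)·a) (the scalar φ(g) times the basis element of σ(g)·a) is a (σ,τ)-derivation. -/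
namespace MonoidAlgebra

variable {k G A : Type*} [CommSemiring k] [Monoid G] [Semiring A] [Algebra k A]

theorem twisted_leibniz_of_forall_of (σ τ : MonoidAlgebra k G →ₐ[k] A)
    (D : MonoidAlgebra k G →ₗ[k] A)
    (h : ∀ g g' : G, D (of k G g * of k G g') =
      D (of k G g) * τ (of k G g') + σ (of k G g) * D (of k G g'))
    (x y : MonoidAlgebra k G) : D (x * y) = D x * τ y + σ x * D y := by
  have hbilin : (LinearMap.mul k (MonoidAlgebra k G)).compr₂ D =
      (LinearMap.mul k A).compl₁₂ D τ.toLinearMap +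
        (LinearMap.mul k A).compl₁₂ σ.toLinearMap D := by
    ext g g'
    simpa using h g g'
  simpa using LinearMap.congr_fun₂ hbilin x y

theorem twisted_leibniz_of_central_character {σ τ : G →* G} {a : G}
    (ha : ∀ v : G, a * τ v = σ v * a) {φ : G → k} (hφ : ∀ x y : G, φ (x * y) = φ x + φ y)
    {D : MonoidAlgebra k G →ₗ[k] MonoidAlgebra k G}
    (hD : ∀ g : G, D (of k G g) = φ g • of k G (σ g * a)) (g g' : G) :
    D (of k G g * of k G g') = D (of k G g) * mapDomainAlgHom k k τ (of k G g') +
      mapDomainAlgHom k k σ (of k G g) * D (of k G g') := by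
  have hσ : ∀ v, mapDomainAlgHom k k σ (of k G v) = of k G (σ v) := fun v => by simp
  have hτ : ∀ v, mapDomainAlgHom k k τ (of k G v) = of k G (τ v) := fun v => by simp
  have hleft : σ g * a * τ g' = σ (g * g') * a := by rw [mul_assoc, ha, map_mul, mul_assoc]
  have hright : σ g * (σ g' * a) = σ (g * g') * a := by rw [map_mul, mul_assoc]
  rw [← map_mul, hD, hD, hD, hσ, hτ, smul_mul_assoc, mul_smul_comm, ← map_mul, ← map_mul,
    hleft, hright, hφ, add_smul]

end MonoidAlgebra

/-- for a `(σ,τ)`-central element `a ∈ G` and an additive character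
`φ : G → (ℂ,+)`, the ℂ-linear map determined on basis elements by
`D(g) = φ(g)·(σ(g)·a)` is a `(σ,τ)`-derivation. -/
theorem central_map_is_sigma_tau_derivation
    {G : Type*} [Group G] (σ τ : G →* G) (a : G)
    (ha : ∀ v : G, a * τ v = σ v * a)
    (φ : G → ℂ) (hφ : ∀ x y : G, φ (x * y) = φ x + φ y)
    (D : MonoidAlgebra ℂ G →ₗ[ℂ] MonoidAlgebra ℂ G)
    (hDbasis : ∀ g : G, D (MonoidAlgebra.of ℂ G g)
        = φ g • MonoidAlgebra.of ℂ G (σ g * a)) :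
    ∀ x y : MonoidAlgebra ℂ G, D (x * y) = D x * algExt τ y + algExt σ x * D y :=
  MonoidAlgebra.twisted_leibniz_of_forall_of _ _ D
    (MonoidAlgebra.twisted_leibniz_of_central_character ha hφ hDbasis)
end

section
/- Let G be a group, σ, τ : G → G group endomorphisms, a ∈ G a (σ,τ)-central element, and φ : G → (ℂ, +) a nonzero group homomorphism. Then the (σ,τ)-central derivation D determined by D(g) = φ(g)·(σ(g)·a) is not quasi-inner: there exist g, h ∈ G with σ(g)⁻¹·h = h·τ(g)⁻¹ and D(g)(h) ≠ 0. -/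
/-! `D(g)` is `φ(g)` times the basis element `σ(g)·a`, and `(σ,τ)`-centrality of `a` says exactly
that `h = σ(g)·a` satisfies `σ(g)⁻¹·h = a = h·τ(g)⁻¹`; so any `g` with `φ(g) ≠ 0` is a witness. -/

theorem SemiconjBy.inv_mul_mul_eq_mul_mul_inv {G : Type*} [Group G] {a x y : G}
    (h : SemiconjBy a y x) : x⁻¹ * (x * a) = x * a * y⁻¹ := by
  rw [inv_mul_cancel_left, ← h, mul_inv_cancel_right]

theorem MonoidAlgebra.coeff_smul_of_self {k G : Type*} [Semiring k] [Monoid G] (r : k) (g : G) :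
    (r • MonoidAlgebra.of k G g).coeff g = r := by
  simp [MonoidAlgebra.of_apply]

theorem central_derivation_not_quasi_inner_general
    {G : Type*} [Group G] (σ τ : G →* G) (a : G)
    (ha : ∀ v : G, a * τ v = σ v * a)
    (φ : G → ℂ) (hφne : φ ≠ 0)
    (D : MonoidAlgebra ℂ G →ₗ[ℂ] MonoidAlgebra ℂ G)
    (hDbasis : ∀ g : G, D (MonoidAlgebra.of ℂ G g)
        = φ g • MonoidAlgebra.of ℂ G (σ g * a)) :
    ∃ g h : G, (σ g)⁻¹ * h = h * (τ g)⁻¹ ∧ (D (MonoidAlgebra.of ℂ G g)).coeff h ≠ 0 := by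
  obtain ⟨g, hg⟩ := Function.ne_iff.mp hφne
  refine ⟨g, σ g * a, SemiconjBy.inv_mul_mul_eq_mul_mul_inv (ha g), ?_⟩
  rwa [hDbasis, MonoidAlgebra.coeff_smul_of_self]

/-- for a `(σ,τ)`-central element `a ∈ G` and a *nonzero* additive character
`φ : G → (ℂ,+)`, the `(σ,τ)`-central derivation `D` determined by `D(g) = φ(g)·(σ(g)·a)`
is not quasi-inner: there is a loop `(h,g)` (i.e. `σ(g)⁻¹·h = h·τ(g)⁻¹`) on which the
coefficient `D(g)(h)` is nonzero. -/
theorem central_derivation_not_quasi_inner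
    {G : Type*} [Group G] (σ τ : G →* G) (a : G)
    (ha : ∀ v : G, a * τ v = σ v * a)
    (φ : G → ℂ) (hφ : ∀ x y : G, φ (x * y) = φ x + φ y) (hφne : φ ≠ 0)
    (D : MonoidAlgebra ℂ G →ₗ[ℂ] MonoidAlgebra ℂ G)
    (hDbasis : ∀ g : G, D (MonoidAlgebra.of ℂ G g)
        = φ g • MonoidAlgebra.of ℂ G (σ g * a)) :
    ∃ g h : G, (σ g)⁻¹ * h = h * (τ g)⁻¹ ∧ (D (MonoidAlgebra.of ℂ G g)).coeff h ≠ 0 :=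
  central_derivation_not_quasi_inner_general σ τ a ha φ hφne D hDbasis
end

section
/- Let G be a group, σ, τ : G → G group endomorphisms, and D a quasi-inner (σ,τ)-derivation of ℂ[G]. Then there exists a function P : G → ℂ such that for all g, h ∈ G the coefficient D(g)(h) = P(h·τ(g)⁻¹) − P(σ(g)⁻¹·h). -/
open MulAction

section Cocycle

variable {G X A : Type*} [Group G] [MulAction G X] [AddCommGroup A] {c : G → X → A}

theorem cocycle_eq_of_smul_eq (hc : ∀ g₁ g₂ x, c (g₁ * g₂) x = c g₁ (g₂ • x) + c g₂ x)
    (hstab : ∀ g x, g • x = x → c g x = 0) {g₁ g₂ : G} {x : X} (h : g₁ • x = g₂ • x) :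
    c g₁ x = c g₂ x := by
  have hfix : (g₁⁻¹ * g₂) • x = x := by rw [mul_smul, ← h, inv_smul_smul]
  calc c g₁ x = c g₁ ((g₁⁻¹ * g₂) • x) + c (g₁⁻¹ * g₂) x := by
        rw [hfix, hstab _ _ hfix, add_zero]
    _ = c g₂ x := by rw [← hc, mul_inv_cancel_left]

theorem exists_eq_sub_of_cocycle (hc : ∀ g₁ g₂ x, c (g₁ * g₂) x = c g₁ (g₂ • x) + c g₂ x)
    (hstab : ∀ g x, g • x = x → c g x = 0) :
    ∃ P : X → A, ∀ g x, c g x = P (g • x) - P x := by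
  let rep (x : X) : X := (⟦x⟧ : orbitRel.Quotient G X).out
  have hrep (x : X) : x ∈ orbit G (rep x) :=
    mem_orbit_symm.mp (Quotient.mk_out (s := orbitRel G X) x)
  choose k hk using fun x => mem_orbit_iff.mp (hrep x)
  refine ⟨fun x => c (k x) (rep x), fun g x => ?_⟩
  have hrep_smul : rep (g • x) = rep x := by
    simp only [rep, orbitRel.Quotient.quotient_smul_eq]
  have hk_smul : k (g • x) • rep x = (g * k x) • rep x := by
    rw [mul_smul, hk x, ← hrep_smul, hk]
  rw [eq_sub_iff_add_eq]
  calc c g x + c (k x) (rep x) = c (g * k x) (rep x) := by rw [hc, hk]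
    _ = c (k (g • x)) (rep (g • x)) := by
      rw [hrep_smul, cocycle_eq_of_smul_eq hc hstab hk_smul]

end Cocycle

-- A type synonym, so that the twisted action does not clash with left multiplication.
def TwistedConj {G : Type*} [Group G] (_σ _τ : G →* G) : Type _ := G

namespace TwistedConj

variable {G : Type*} [Group G] {σ τ : G →* G}

def mk (σ τ : G →* G) : G ≃ TwistedConj σ τ := Equiv.refl G

instance : MulAction G (TwistedConj σ τ) where
  smul g u := mk σ τ (σ g * (mk σ τ).symm u * (τ g)⁻¹)
  one_smul u := by simp [HSMul.hSMul]
  mul_smul g₁ g₂ u := by simp [HSMul.hSMul, mul_assoc]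

theorem smul_mk (g u : G) : g • mk σ τ u = mk σ τ (σ g * u * (τ g)⁻¹) := rfl

end TwistedConj

theorem algExt_of {G : Type*} [Group G] (ρ : G →* G) (g : G) :
    algExt ρ (MonoidAlgebra.of ℂ G g) = MonoidAlgebra.of ℂ G (ρ g) := by
  simp [algExt, MonoidAlgebra.mapDomainAlgHom]

open MonoidAlgebra TwistedConj

section Derivation

variable {G : Type*} [Group G] {σ τ : G →* G} {D : MonoidAlgebra ℂ G →ₗ[ℂ] MonoidAlgebra ℂ G}

theorem coeff_of_mul_of_derivation
    (hD : ∀ a b : MonoidAlgebra ℂ G, D (a * b) = D a * algExt τ b + algExt σ a * D b)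
    (g₁ g₂ h : G) :
    (D (of ℂ G (g₁ * g₂))).coeff h =
      (D (of ℂ G g₁)).coeff (h * (τ g₂)⁻¹) + (D (of ℂ G g₂)).coeff ((σ g₁)⁻¹ * h) := by
  rw [map_mul, hD, algExt_of, algExt_of, coeff_add]
  simp [of_apply]

variable (σ τ D) in
noncomputable def derivationCocycle (g : G) (v : TwistedConj σ τ) : ℂ :=
  (D (of ℂ G g)).coeff (σ g * (mk σ τ).symm v)

theorem derivationCocycle_mul
    (hD : ∀ a b : MonoidAlgebra ℂ G, D (a * b) = D a * algExt τ b + algExt σ a * D b)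
    (g₁ g₂ : G) (v : TwistedConj σ τ) :
    derivationCocycle σ τ D (g₁ * g₂) v =
      derivationCocycle σ τ D g₁ (g₂ • v) + derivationCocycle σ τ D g₂ v := by
  obtain ⟨u, rfl⟩ := (mk σ τ).surjective v
  simp only [derivationCocycle, smul_mk, Equiv.symm_apply_apply]
  rw [coeff_of_mul_of_derivation hD, σ.map_mul]
  simp only [mul_assoc, inv_mul_cancel_left]

theorem derivationCocycle_eq_zero_of_smul_eq
    (hqi : ∀ g h : G, (σ g)⁻¹ * h = h * (τ g)⁻¹ → (D (of ℂ G g)).coeff h = 0)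
    (g : G) (v : TwistedConj σ τ) (hv : g • v = v) : derivationCocycle σ τ D g v = 0 := by
  obtain ⟨u, rfl⟩ := (mk σ τ).surjective v
  rw [smul_mk, (mk σ τ).apply_eq_iff_eq] at hv
  apply hqi
  simp [hv]

end Derivation

/-- a quasi-inner `(σ,τ)`-derivation `D` of `ℂ[G]` is a "generalized potential"
derivation: there is `P : G → ℂ` with `D(g)(h) = P(h·τ(g)⁻¹) − P(σ(g)⁻¹·h)` for all `g h`. -/
theorem quasi_inner_derivation_potential
    {G : Type*} [Group G] (σ τ : G →* G)
    (D : MonoidAlgebra ℂ G →ₗ[ℂ] MonoidAlgebra ℂ G)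
    (hD : ∀ a b : MonoidAlgebra ℂ G, D (a * b) = D a * algExt τ b + algExt σ a * D b)
    (hqi : ∀ g h : G, (σ g)⁻¹ * h = h * (τ g)⁻¹ → (D (MonoidAlgebra.of ℂ G g)).coeff h = 0) :
    ∃ P : G → ℂ, ∀ g h : G,
      (D (MonoidAlgebra.of ℂ G g)).coeff h = P (h * (τ g)⁻¹) - P ((σ g)⁻¹ * h) := by
  obtain ⟨P, hP⟩ := exists_eq_sub_of_cocycle (derivationCocycle_mul hD)
    (derivationCocycle_eq_zero_of_smul_eq hqi)
  refine ⟨P ∘ mk σ τ, fun g h => ?_⟩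
  simpa [derivationCocycle, smul_mk, mul_assoc] using hP g (mk σ τ ((σ g)⁻¹ * h))
end

section
/- Let G be a group and σ, τ : G → G group endomorphisms, and suppose G is rank 2 (σ,τ)-nilpotent, i.e. every commutator x·y·x⁻¹·y⁻¹ lies in the (σ,τ)-center Z_{σ,τ}. Then all elements of a (σ,τ)-conjugacy class have the same (σ,τ)-centralizer: for all g, p ∈ G, Z_{σ,τ}(σ(g)·p·τ(g)⁻¹) = Z_{σ,τ}(p). -/
/-- if `G` is rank 2 `(σ,τ)`-nilpotent (every commutator lies in the
`(σ,τ)`-center), then all elements of a `(σ,τ)`-conjugacy class have the same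
`(σ,τ)`-centralizer: `Z_{σ,τ}(σ(g)·p·τ(g)⁻¹) = Z_{σ,τ}(p)`. -/
theorem sigma_tau_centralizer_constant_on_class
    {G : Type*} [Group G] (σ τ : G →* G)
    (hnil : ∀ x y : G, x * y * x⁻¹ * y⁻¹ ∈ {z : G | ∀ p : G, σ z * p = p * τ z}) :
    ∀ g p : G,
      {z : G | σ z * (σ g * p * (τ g)⁻¹) = (σ g * p * (τ g)⁻¹) * τ z}
        = {z : G | σ z * p = p * τ z} := by
  -- key: centralizer of `p` is closed under conjugation by any `g`
  have key : ∀ z g p : G, σ z * p = p * τ z →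
      σ (g⁻¹ * z * g) * p = p * τ (g⁻¹ * z * g) := by
    intro z g p hz
    have hd := hnil z⁻¹ g⁻¹ p
    have e : g⁻¹ * z * g = z * (z⁻¹ * g⁻¹ * z⁻¹⁻¹ * g⁻¹⁻¹) := by group
    rw [e, map_mul σ z, map_mul τ z, mul_assoc, hd, ← mul_assoc, hz, mul_assoc]
  -- membership in LHS is equivalent to `g⁻¹zg` being in centralizer of `p`
  have equiv : ∀ g p z : G,
      (σ z * (σ g * p * (τ g)⁻¹) = (σ g * p * (τ g)⁻¹) * τ z) ↔
      (σ (g⁻¹ * z * g) * p = p * τ (g⁻¹ * z * g)) := by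
    intro g p z
    simp only [map_mul, map_inv]
    constructor
    · intro h
      have h' := congrArg (fun w => (σ g)⁻¹ * w * τ g) h
      simpa [mul_assoc] using h'
    · intro h
      have h' := congrArg (fun w => σ g * w * (τ g)⁻¹) h
      simpa [mul_assoc] using h'
  intro g p
  ext z
  simp only [Set.mem_setOf_eq, equiv g p z]
  constructor
  · intro h
    have h2 := key (g⁻¹ * z * g) g⁻¹ p h
    have e : g⁻¹⁻¹ * (g⁻¹ * z * g) * g⁻¹ = z := by group
    rwa [e] at h2
  · intro h
    exact key z g p h
end
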